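/- Let ≿ be a complete, transitive binary relation on a convex subset X of ℝⁿ that is weakly monotone (x > y coordinatewise implies x ≿ y) and weakly monotone in n−1 of its coordinates, with X order-bounded. If ≿ is separately continuous on X, then ≿ is continuous on the interior of X; conversely, continuity implies separate continuity. Hence on int X, separate continuity and continuity are equivalent. -/
import Mathlib


open Set

def StrictR {α : Type*} (R : α → α → Prop) (x y : α) : Prop := R x y ∧ ¬ R y x

/-- The line through `x` parallel to the `i`-th coordinate axis, intersected with `S`. -/
def LineSet {I : Type*} (S : Set (I → ℝ)) (i : I) (x : I → ℝ) : Set (I → ℝ) :=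
  {y ∈ S | ∀ j, j ≠ i → y j = x j}

/-- Separate continuity of a relation on `S` (product topology). -/
def SepCont {I : Type*} (R : (I → ℝ) → (I → ℝ) → Prop) (S : Set (I → ℝ)) : Prop :=
  ∀ (i : I), ∀ ⦃x⦄, x ∈ S → ∀ ⦃z⦄, z ∈ S →
    IsClosed {p : LineSet S i x | R p.1 z} ∧ IsClosed {p : LineSet S i x | R z p.1} ∧
    IsOpen {p : LineSet S i x | StrictR R p.1 z} ∧ IsOpen {p : LineSet S i x | StrictR R z p.1}

/-- Continuity of a relation on `S`: closed weak sections and open strict sections in `S`. -/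
def ContOn {I : Type*} (R : (I → ℝ) → (I → ℝ) → Prop) (S : Set (I → ℝ)) : Prop :=
  ∀ ⦃z⦄, z ∈ S →
    IsClosed {p : S | R p.1 z} ∧ IsClosed {p : S | R z p.1} ∧
    IsOpen {p : S | StrictR R p.1 z} ∧ IsOpen {p : S | StrictR R z p.1}

lemma descent {n : ℕ} {S : Set (Fin n → ℝ)} (hS : IsOpen S)
    {R : (Fin n → ℝ) → (Fin n → ℝ) → Prop}
    (hsep : SepCont R S) {z x : Fin n → ℝ} (hz : z ∈ S) (hx : x ∈ S)
    (hxz : ¬ R z x) : ∃ y ∈ S, (∀ i, y i < x i) ∧ ¬ R z y := by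
  obtain ⟨r, hr, hball⟩ := Metric.isOpen_iff.1 hS x hx
  have key : ∀ k, k ≤ n → ∃ y : Fin n → ℝ, (∀ i, dist (y i) (x i) < r) ∧
      (∀ i : Fin n, (i : ℕ) < k → y i < x i) ∧
      (∀ i : Fin n, ¬ (i : ℕ) < k → y i = x i) ∧ ¬ R z y := by
    intro k
    induction k with
    | zero =>
      intro _
      exact ⟨x, fun i => by simpa using hr, fun i h => absurd h (Nat.not_lt_zero _),
        fun i _ => rfl, hxz⟩
    | succ k ih =>
      intro hk
      obtain ⟨y, hdist, hlt, heq, hR⟩ := ih (Nat.le_of_succ_le hk)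
      have hyS : y ∈ S := hball (by rw [Metric.mem_ball]; exact (dist_pi_lt_iff hr).2 hdist)
      set i : Fin n := ⟨k, hk⟩ with hidef
      obtain ⟨_, hcl, _, _⟩ := hsep i hyS hz
      have hyL : y ∈ LineSet S i y := ⟨hyS, fun j _ => rfl⟩
      have hopen : IsOpen {p : LineSet S i y | R z p.1}ᶜ := hcl.isOpen_compl
      have hmem : (⟨y, hyL⟩ : LineSet S i y) ∈ {p : LineSet S i y | R z p.1}ᶜ := hR
      obtain ⟨ε, hε, hballε⟩ := Metric.isOpen_iff.1 hopen _ hmem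
      have hmin : 0 < min ε r := lt_min hε hr
      set t : ℝ := min ε r / 2 with htdef
      have ht0 : 0 < t := by positivity
      have htε : t < ε := by have := min_le_left ε r; simp only [htdef]; linarith
      have htr : t < r := by have := min_le_right ε r; simp only [htdef]; linarith
      have hyix : y i = x i := heq i (lt_irrefl k)
      set y' : Fin n → ℝ := Function.update y i (y i - t) with hy'def
      have hdist' : ∀ j, dist (y' j) (x j) < r := by
        intro j
        by_cases hj : j = i
        · rw [hj]
          simp only [hy'def, Function.update_self, hyix]
          have : x i - t - x i = -t := by ring
          rw [Real.dist_eq, this, abs_neg, abs_of_pos ht0]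
          exact htr
        · simp only [hy'def, Function.update_of_ne hj]; exact hdist j
      have hy'S : y' ∈ S := hball (by rw [Metric.mem_ball]; exact (dist_pi_lt_iff hr).2 hdist')
      have hy'L : y' ∈ LineSet S i y := ⟨hy'S, fun j hj => Function.update_of_ne hj _ _⟩
      refine ⟨y', hdist', ?_, ?_, ?_⟩
      · intro j hjk
        by_cases hj : j = i
        · rw [hj]
          simp only [hy'def, Function.update_self, hyix]
          linarith
        · have hjk' : (j : ℕ) < k := by
            have hne : (j : ℕ) ≠ k := fun h => hj (Fin.ext h)
            omega
          rw [hy'def, Function.update_of_ne hj]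
          exact hlt j hjk'
      · intro j hjk
        have hj : j ≠ i := fun h => hjk (by rw [h]; exact Nat.lt_succ_self k)
        simp only [hy'def, Function.update_of_ne hj]
        exact heq j (fun h => hjk (Nat.lt_succ_of_lt h))
      · have hdyy : dist (⟨y', hy'L⟩ : LineSet S i y) (⟨y, hyL⟩ : LineSet S i y) < ε := by
          rw [Subtype.dist_eq]
          refine (dist_pi_lt_iff hε).2 fun j => ?_
          by_cases hj : j = i
          · rw [hj]
            show dist (Function.update y i (y i - t) i) (y i) < ε
            rw [Function.update_self]
            have : y i - t - y i = -t := by ring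
            rw [Real.dist_eq, this, abs_neg, abs_of_pos ht0]
            exact htε
          · show dist (Function.update y i (y i - t) j) (y j) < ε
            rw [Function.update_of_ne hj]; simpa using hε
        exact hballε (Metric.mem_ball.2 hdyy)
  obtain ⟨y, hdist, hlt, _, hR⟩ := key n le_rfl
  exact ⟨y, hball (by rw [Metric.mem_ball]; exact (dist_pi_lt_iff hr).2 hdist),
    fun i => hlt i i.isLt, hR⟩

lemma ascent {n : ℕ} {S : Set (Fin n → ℝ)} (hS : IsOpen S)
    {R : (Fin n → ℝ) → (Fin n → ℝ) → Prop}
    (hsep : SepCont R S) {z x : Fin n → ℝ} (hz : z ∈ S) (hx : x ∈ S)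
    (hxz : ¬ R x z) : ∃ y ∈ S, (∀ i, x i < y i) ∧ ¬ R y z := by
  obtain ⟨r, hr, hball⟩ := Metric.isOpen_iff.1 hS x hx
  have key : ∀ k, k ≤ n → ∃ y : Fin n → ℝ, (∀ i, dist (y i) (x i) < r) ∧
      (∀ i : Fin n, (i : ℕ) < k → x i < y i) ∧
      (∀ i : Fin n, ¬ (i : ℕ) < k → y i = x i) ∧ ¬ R y z := by
    intro k
    induction k with
    | zero =>
      intro _
      exact ⟨x, fun i => by simpa using hr, fun i h => absurd h (Nat.not_lt_zero _),
        fun i _ => rfl, hxz⟩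
    | succ k ih =>
      intro hk
      obtain ⟨y, hdist, hlt, heq, hR⟩ := ih (Nat.le_of_succ_le hk)
      have hyS : y ∈ S := hball (by rw [Metric.mem_ball]; exact (dist_pi_lt_iff hr).2 hdist)
      set i : Fin n := ⟨k, hk⟩ with hidef
      obtain ⟨hcl, _, _, _⟩ := hsep i hyS hz
      have hyL : y ∈ LineSet S i y := ⟨hyS, fun j _ => rfl⟩
      have hopen : IsOpen {p : LineSet S i y | R p.1 z}ᶜ := hcl.isOpen_compl
      have hmem : (⟨y, hyL⟩ : LineSet S i y) ∈ {p : LineSet S i y | R p.1 z}ᶜ := hR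
      obtain ⟨ε, hε, hballε⟩ := Metric.isOpen_iff.1 hopen _ hmem
      have hmin : 0 < min ε r := lt_min hε hr
      set t : ℝ := min ε r / 2 with htdef
      have ht0 : 0 < t := by positivity
      have htε : t < ε := by have := min_le_left ε r; simp only [htdef]; linarith
      have htr : t < r := by have := min_le_right ε r; simp only [htdef]; linarith
      have hyix : y i = x i := heq i (lt_irrefl k)
      set y' : Fin n → ℝ := Function.update y i (y i + t) with hy'def
      have hdist' : ∀ j, dist (y' j) (x j) < r := by
        intro j
        by_cases hj : j = i
        · rw [hj]
          simp only [hy'def, Function.update_self, hyix]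
          have : x i + t - x i = t := by ring
          rw [Real.dist_eq, this, abs_of_pos ht0]
          exact htr
        · simp only [hy'def, Function.update_of_ne hj]; exact hdist j
      have hy'S : y' ∈ S := hball (by rw [Metric.mem_ball]; exact (dist_pi_lt_iff hr).2 hdist')
      have hy'L : y' ∈ LineSet S i y := ⟨hy'S, fun j hj => Function.update_of_ne hj _ _⟩
      refine ⟨y', hdist', ?_, ?_, ?_⟩
      · intro j hjk
        by_cases hj : j = i
        · rw [hj]
          simp only [hy'def, Function.update_self, hyix]
          linarith
        · have hjk' : (j : ℕ) < k := by
            have hne : (j : ℕ) ≠ k := fun h => hj (Fin.ext h)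
            omega
          rw [hy'def, Function.update_of_ne hj]
          exact hlt j hjk'
      · intro j hjk
        have hj : j ≠ i := fun h => hjk (by rw [h]; exact Nat.lt_succ_self k)
        simp only [hy'def, Function.update_of_ne hj]
        exact heq j (fun h => hjk (Nat.lt_succ_of_lt h))
      · have hdyy : dist (⟨y', hy'L⟩ : LineSet S i y) (⟨y, hyL⟩ : LineSet S i y) < ε := by
          rw [Subtype.dist_eq]
          refine (dist_pi_lt_iff hε).2 fun j => ?_
          by_cases hj : j = i
          · rw [hj]
            show dist (Function.update y i (y i + t) i) (y i) < ε
            rw [Function.update_self]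
            have : y i + t - y i = t := by ring
            rw [Real.dist_eq, this, abs_of_pos ht0]
            exact htε
          · show dist (Function.update y i (y i + t) j) (y j) < ε
            rw [Function.update_of_ne hj]; simpa using hε
        exact hballε (Metric.mem_ball.2 hdyy)
  obtain ⟨y, hdist, hlt, _, hR⟩ := key n le_rfl
  exact ⟨y, hball (by rw [Metric.mem_ball]; exact (dist_pi_lt_iff hr).2 hdist),
    fun i => hlt i i.isLt, hR⟩

lemma aux_clopen {α : Type*} [TopologicalSpace α] [Subsingleton α] (s : Set α) :
    IsOpen s ∧ IsClosed s := by
  have : DiscreteTopology α := Subsingleton.discreteTopology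
  exact ⟨isOpen_discrete s, isClosed_discrete s⟩

lemma triv_cont {I : Type*} [Subsingleton (I → ℝ)] (R : (I → ℝ) → (I → ℝ) → Prop)
    (S : Set (I → ℝ)) : ContOn R S := fun _z _hz =>
  ⟨(aux_clopen _).2, (aux_clopen _).2, (aux_clopen _).1, (aux_clopen _).1⟩

lemma triv_sep {I : Type*} [Subsingleton (I → ℝ)] (R : (I → ℝ) → (I → ℝ) → Prop)
    (S : Set (I → ℝ)) : SepCont R S := fun _i _x _hx _z _hz =>
  ⟨(aux_clopen _).2, (aux_clopen _).2, (aux_clopen _).1, (aux_clopen _).1⟩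

lemma cont_to_sep {I : Type*} {R : (I → ℝ) → (I → ℝ) → Prop} {S : Set (I → ℝ)}
    (h : ContOn R S) : SepCont R S := by
  intro i x _hx z hz
  obtain ⟨h1, h2, h3, h4⟩ := h hz
  have hc : Continuous (fun p : LineSet S i x => (⟨p.1, p.2.1⟩ : S)) :=
    Continuous.subtype_mk continuous_subtype_val _
  exact ⟨h1.preimage hc, h2.preimage hc, h3.preimage hc, h4.preimage hc⟩

lemma sep_restrict {I : Type*} {R : (I → ℝ) → (I → ℝ) → Prop} {X : Set (I → ℝ)}
    (h : SepCont R X) : SepCont R (interior X) := by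
  intro i x hx z hz
  obtain ⟨h1, h2, h3, h4⟩ := h i (interior_subset hx) (interior_subset hz)
  have hc : Continuous (fun p : LineSet (interior X) i x =>
      (⟨p.1, interior_subset p.2.1, p.2.2⟩ : LineSet X i x)) :=
    Continuous.subtype_mk continuous_subtype_val _
  exact ⟨h1.preimage hc, h2.preimage hc, h3.preimage hc, h4.preimage hc⟩

lemma sep_to_cont {n : ℕ} (hn : 0 < n) {S : Set (Fin n → ℝ)} (hS : IsOpen S)
    {R : (Fin n → ℝ) → (Fin n → ℝ) → Prop}
    (hcomp : ∀ ⦃x⦄, x ∈ S → ∀ ⦃y⦄, y ∈ S → R x y ∨ R y x)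
    (htrans : ∀ ⦃x⦄, x ∈ S → ∀ ⦃y⦄, y ∈ S → ∀ ⦃z⦄, z ∈ S → R x y → R y z → R x z)
    (hmono : ∀ ⦃x⦄, x ∈ S → ∀ ⦃y⦄, y ∈ S → y < x → R x y)
    (hsep : SepCont R S) : ContOn R S := by
  intro z hz
  have hUp : IsOpen {p : S | StrictR R p.1 z} := by
    rw [isOpen_iff_forall_mem_open]
    rintro ⟨x, hxS⟩ ⟨_hRxz, hnRzx⟩
    obtain ⟨y, hyS, hylt, hnRzy⟩ := descent hS hsep hz hxS hnRzx
    refine ⟨{p : S | ∀ i, y i < p.1 i}, ?_, ?_, ?_⟩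
    · rintro ⟨w, hwS⟩ hw
      have hyw : y < w := lt_of_le_of_ne (fun i => (hw i).le)
        (fun h => absurd (congrFun h ⟨0, hn⟩) (ne_of_lt (hw _)))
      have hRwy : R w y := hmono hwS hyS hyw
      have hnRzw : ¬ R z w := fun h => hnRzy (htrans hz hwS hyS h hRwy)
      exact ⟨(hcomp hwS hz).resolve_right hnRzw, hnRzw⟩
    · have h1 : IsOpen {w : Fin n → ℝ | ∀ i, y i < w i} := by
        have he : {w : Fin n → ℝ | ∀ i, y i < w i} = ⋂ i, {w | y i < w i} := by
          ext w; simp [Set.mem_iInter]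
        rw [he]
        exact isOpen_iInter_of_finite fun i => isOpen_lt continuous_const (continuous_apply i)
      exact h1.preimage continuous_subtype_val
    · exact hylt
  have hDown : IsOpen {p : S | StrictR R z p.1} := by
    rw [isOpen_iff_forall_mem_open]
    rintro ⟨x, hxS⟩ ⟨_hRzx, hnRxz⟩
    obtain ⟨y, hyS, hylt, hnRyz⟩ := ascent hS hsep hz hxS hnRxz
    refine ⟨{p : S | ∀ i, p.1 i < y i}, ?_, ?_, ?_⟩
    · rintro ⟨w, hwS⟩ hw
      have hwy : w < y := lt_of_le_of_ne (fun i => (hw i).le)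
        (fun h => absurd (congrFun h ⟨0, hn⟩) (ne_of_lt (hw _)))
      have hRyw : R y w := hmono hyS hwS hwy
      have hnRwz : ¬ R w z := fun h => hnRyz (htrans hyS hwS hz hRyw h)
      exact ⟨(hcomp hz hwS).resolve_right hnRwz, hnRwz⟩
    · have h1 : IsOpen {w : Fin n → ℝ | ∀ i, w i < y i} := by
        have he : {w : Fin n → ℝ | ∀ i, w i < y i} = ⋂ i, {w | w i < y i} := by
          ext w; simp [Set.mem_iInter]
        rw [he]
        exact isOpen_iInter_of_finite fun i => isOpen_lt (continuous_apply i) continuous_const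
      exact h1.preimage continuous_subtype_val
    · exact hylt
  have hc1 : {p : S | R p.1 z} = {p : S | StrictR R z p.1}ᶜ := by
    ext ⟨w, hw⟩
    simp only [mem_setOf_eq, mem_compl_iff, StrictR, not_and, not_not]
    constructor
    · exact fun h _ => h
    · intro h
      rcases hcomp hw hz with h' | h'
      · exact h'
      · exact h h'
  have hc2 : {p : S | R z p.1} = {p : S | StrictR R p.1 z}ᶜ := by
    ext ⟨w, hw⟩
    simp only [mem_setOf_eq, mem_compl_iff, StrictR, not_and, not_not]
    constructor
    · exact fun h _ => h
    · intro h
      rcases hcomp hz hw with h' | h'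
      · exact h'
      · exact h h'
  exact ⟨hc1 ▸ hDown.isClosed_compl, hc2 ▸ hUp.isClosed_compl, hUp, hDown⟩

theorem stmt8 {n : ℕ} (X : Set (Fin n → ℝ)) (hX : Convex ℝ X)
    (hbdd : ∀ ⦃x⦄, x ∈ X → ∀ ⦃y⦄, y ∈ X →
      ∃ a ∈ X, ∃ b ∈ X, x ≤ a ∧ y ≤ a ∧ b ≤ x ∧ b ≤ y)
    (R : (Fin n → ℝ) → (Fin n → ℝ) → Prop)
    (hcomp : ∀ ⦃x⦄, x ∈ X → ∀ ⦃y⦄, y ∈ X → R x y ∨ R y x)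
    (htrans : ∀ ⦃x⦄, x ∈ X → ∀ ⦃y⦄, y ∈ X → ∀ ⦃z⦄, z ∈ X → R x y → R y z → R x z)
    (hmono : ∀ ⦃x⦄, x ∈ X → ∀ ⦃y⦄, y ∈ X → y < x → R x y)
    (hmonoCoord : ∃ i₀ : Fin n, ∀ i : Fin n, i ≠ i₀ → ∀ ⦃x⦄, x ∈ X → ∀ c : ℝ, x i < c →
      Function.update x i c ∈ X → R (Function.update x i c) x) :
    (SepCont R X → ContOn R (interior X)) ∧
    (ContOn R X → SepCont R X) ∧
    (SepCont R (interior X) ↔ ContOn R (interior X)) := by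
  rcases Nat.eq_zero_or_pos n with hn | hn
  · subst hn
    have : Subsingleton (Fin 0 → ℝ) := ⟨fun a b => funext fun i => i.elim0⟩
    exact ⟨fun _ => triv_cont R _, fun _ => triv_sep R _,
      ⟨fun _ => triv_cont R _, fun _ => triv_sep R _⟩⟩
  · have hSX : interior X ⊆ X := interior_subset
    have hcomp' : ∀ ⦃x⦄, x ∈ interior X → ∀ ⦃y⦄, y ∈ interior X → R x y ∨ R y x :=
      fun x hx y hy => hcomp (hSX hx) (hSX hy)
    have htrans' : ∀ ⦃x⦄, x ∈ interior X → ∀ ⦃y⦄, y ∈ interior X → ∀ ⦃z⦄, z ∈ interior X →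
        R x y → R y z → R x z := fun x hx y hy z hz => htrans (hSX hx) (hSX hy) (hSX hz)
    have hmono' : ∀ ⦃x⦄, x ∈ interior X → ∀ ⦃y⦄, y ∈ interior X → y < x → R x y :=
      fun x hx y hy h => hmono (hSX hx) (hSX hy) h
    exact ⟨fun hs => sep_to_cont hn isOpen_interior hcomp' htrans' hmono' (sep_restrict hs),
      fun hc => cont_to_sep hc,
      ⟨fun hs => sep_to_cont hn isOpen_interior hcomp' htrans' hmono' hs,
        fun hc => cont_to_sep hc⟩⟩
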